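/- In the group G = (ℤ/13ℤ)² of order 169, the four 7-element subsets {(0,0),(0,1),(1,0),(1,2),(3,5),(7,12),(8,7)}, {(0,0),(0,3),(3,1),(4,4),(5,0),(5,8),(9,5)}, {(0,0),(0,4),(1,11),(2,4),(4,0),(10,5),(11,2)}, {(0,0),(0,6),(2,1),(3,6),(6,0),(8,10),(10,3)} form a (169,7,1)-difference family, and hence their translates form a Steiner system S(2,7,169). -/
import Mathlib

/-- Number of ordered pairs of distinct elements of `B` whose difference is `g`. -/
def dcount {G : Type*} [AddCommGroup G] [DecidableEq G] (B : Finset G) (g : G) : ℕ :=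
  ((B ×ˢ B).filter (fun p => p.1 ≠ p.2 ∧ p.1 - p.2 = g)).card

def B12 : Fin 4 → Finset (ZMod 13 × ZMod 13) :=
  ![{(0,0),(0,1),(1,0),(1,2),(3,5),(7,12),(8,7)},
    {(0,0),(0,3),(3,1),(4,4),(5,0),(5,8),(9,5)},
    {(0,0),(0,4),(1,11),(2,4),(4,0),(10,5),(11,2)},
    {(0,0),(0,6),(2,1),(3,6),(6,0),(8,10),(10,3)}]

set_option maxRecDepth 10000 in
lemma key12 : ∀ d : ZMod 13 × ZMod 13, d ≠ 0 →
    (Finset.univ.sigma fun i : Fin 4 =>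
      ((B12 i ×ˢ B12 i).filter (fun p => p.1 ≠ p.2 ∧ p.1 - p.2 = d))).card = 1 := by decide

lemma card12 : ∀ i : Fin 4, (B12 i).card = 7 := by decide

theorem stmt_12 :
    (∀ g : ZMod 13 × ZMod 13, g ≠ 0 → (∑ i : Fin 4, dcount (B12 i) g) = 1) ∧
    (∀ C : Finset (ZMod 13 × ZMod 13),
        (∃ i : Fin 4, ∃ g : ZMod 13 × ZMod 13, C = (B12 i).image (· + g)) →
          C.card = 7) ∧
    (∀ p q : ZMod 13 × ZMod 13, p ≠ q →
        ∃! C : Finset (ZMod 13 × ZMod 13),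
          (∃ i : Fin 4, ∃ g : ZMod 13 × ZMod 13, C = (B12 i).image (· + g)) ∧
            p ∈ C ∧ q ∈ C) := by
  refine ⟨?_, ?_, ?_⟩
  · intro g hg
    have h := key12 g hg
    rw [Finset.card_sigma] at h
    simpa [dcount] using h
  · rintro C ⟨i, g, rfl⟩
    rw [Finset.card_image_of_injective _ (add_left_injective g)]
    exact card12 i
  · intro p q hpq
    have hd : p - q ≠ 0 := sub_ne_zero.mpr hpq
    obtain ⟨x0, hx0⟩ := Finset.card_eq_one.mp (key12 (p - q) hd)
    have hx0mem : x0 ∈ (Finset.univ.sigma fun i : Fin 4 =>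
        ((B12 i ×ˢ B12 i).filter (fun r => r.1 ≠ r.2 ∧ r.1 - r.2 = p - q))) := by
      rw [hx0]; exact Finset.mem_singleton_self _
    obtain ⟨i, a, b⟩ := x0
    simp only [Finset.mem_sigma, Finset.mem_filter, Finset.mem_product] at hx0mem
    obtain ⟨-, ⟨ha, hb⟩, -, hab⟩ := hx0mem
    refine ⟨(B12 i).image (· + (p - a)), ⟨⟨i, p - a, rfl⟩, ?_, ?_⟩, ?_⟩
    · exact Finset.mem_image.mpr ⟨a, ha, by abel⟩
    · exact Finset.mem_image.mpr ⟨b, hb, by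
        have : b + (p - a) = p - (a - b) := by abel
        rw [this, hab]; abel⟩
    · rintro C ⟨⟨j, h, rfl⟩, hp, hq⟩
      obtain ⟨a', ha', hpa⟩ := Finset.mem_image.mp hp
      obtain ⟨b', hb', hqb⟩ := Finset.mem_image.mp hq
      have hmem : (⟨j, (a', b')⟩ : Σ _ : Fin 4, (ZMod 13 × ZMod 13) × (ZMod 13 × ZMod 13)) ∈
          (Finset.univ.sigma fun i : Fin 4 =>
            ((B12 i ×ˢ B12 i).filter (fun r => r.1 ≠ r.2 ∧ r.1 - r.2 = p - q))) := by
        simp only [Finset.mem_sigma, Finset.mem_filter, Finset.mem_product]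
        refine ⟨Finset.mem_univ _, ⟨ha', hb'⟩, ?_, ?_⟩
        · rintro rfl; exact hpq (hpa ▸ hqb ▸ rfl)
        · have : a' - b' = (a' + h) - (b' + h) := by abel
          rw [this, hpa, hqb]
      rw [hx0, Finset.mem_singleton, Sigma.mk.inj_iff] at hmem
      obtain ⟨rfl, hmem2⟩ := hmem
      have h2 : (a', b') = (a, b) := eq_of_heq hmem2
      obtain ⟨rfl, rfl⟩ := Prod.mk.injEq a' b' a b ▸ h2
      have : h = p - a' := by rw [← hpa]; abel
      rw [this]
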